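/- arXiv:2210.12860 — 4 statements merged into one kernel-verified Lean document; each statement's English description precedes it below -/
import Mathlib

section
/- (Mirror-prox subproblem closed form) Given g ∈ ℝ^m, w ∈ ℝ^m, ℓ > 0, ρ > 0, the minimizer of Δx ↦ ⟨Δx, g⟩ + (ℓ/2)‖Δx - w‖² + 2ρ‖Δx‖³ over ℝ^m is Δx⋆ = λ(w - g/ℓ) where λ ∈ (0,1] is the unique nonnegative root of (λ - 1)ℓ + 6ρλ²‖w - g/ℓ‖ = 0. -/
open scoped RealInnerProductSpace

lemma cube_ineq {m : ℕ} (x y : EuclideanSpace ℝ (Fin m)) :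
    ‖x‖ ^ 3 + 3 * ‖x‖ * ⟪x, y - x⟫ ≤ ‖y‖ ^ 3 := by
  have h1 : ⟪x, y⟫ ≤ ‖x‖ * ‖y‖ := real_inner_le_norm x y
  have h2 : ⟪x, y - x⟫ = ⟪x, y⟫ - ‖x‖ ^ 2 := by
    rw [inner_sub_right, real_inner_self_eq_norm_sq]
  have hx : (0:ℝ) ≤ ‖x‖ := norm_nonneg x
  have hy : (0:ℝ) ≤ ‖y‖ := norm_nonneg y
  nlinarith [sq_nonneg (‖x‖ - ‖y‖), mul_nonneg hx hy, sq_nonneg (‖x‖ + ‖y‖)]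

/-- Closed form of the mirror-prox cubic subproblem: the minimizer of
`Δx ↦ ⟨Δx, g⟩ + (ℓ/2)‖Δx - w‖² + 2ρ‖Δx‖³` is `λ(w - g/ℓ)` where `λ ∈ (0,1]` is the
unique nonnegative root of `(λ-1)ℓ + 6ρλ²‖w - g/ℓ‖ = 0`. -/
theorem stmt_15 (m : ℕ) (g w : EuclideanSpace ℝ (Fin m)) (ℓ ρ lam : ℝ)
    (hℓ : 0 < ℓ) (hρ : 0 < ρ) (hlam : 0 ≤ lam)
    (hroot : (lam - 1) * ℓ + 6 * ρ * lam ^ 2 * ‖w - ℓ⁻¹ • g‖ = 0) :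
    0 < lam ∧ lam ≤ 1 ∧
      (∀ μ : ℝ, 0 ≤ μ → (μ - 1) * ℓ + 6 * ρ * μ ^ 2 * ‖w - ℓ⁻¹ • g‖ = 0 → μ = lam) ∧
      (∀ Δx : EuclideanSpace ℝ (Fin m),
        ⟪lam • (w - ℓ⁻¹ • g), g⟫ + ℓ / 2 * ‖lam • (w - ℓ⁻¹ • g) - w‖ ^ 2 +
            2 * ρ * ‖lam • (w - ℓ⁻¹ • g)‖ ^ 3 ≤
          ⟪Δx, g⟫ + ℓ / 2 * ‖Δx - w‖ ^ 2 + 2 * ρ * ‖Δx‖ ^ 3) := by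
  have hr0 : (0:ℝ) ≤ ‖w - ℓ⁻¹ • g‖ := norm_nonneg _
  have hlampos : 0 < lam := by
    rcases hlam.lt_or_eq with h | h
    · exact h
    · exfalso; rw [← h] at hroot; nlinarith
  have hlam1 : lam ≤ 1 := by
    nlinarith [mul_nonneg (mul_nonneg (mul_nonneg (by norm_num : (0:ℝ) ≤ 6) hρ.le)
      (sq_nonneg lam)) hr0]
  refine ⟨hlampos, hlam1, ?_, ?_⟩
  · intro μ hμ hμroot
    have hfac : (μ - lam) * (ℓ + 6 * ρ * ‖w - ℓ⁻¹ • g‖ * (μ + lam)) = 0 := by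
      linear_combination hμroot - hroot
    have hpos : 0 < ℓ + 6 * ρ * ‖w - ℓ⁻¹ • g‖ * (μ + lam) := by
      have : 0 ≤ 6 * ρ * ‖w - ℓ⁻¹ • g‖ * (μ + lam) := by positivity
      linarith
    have := mul_eq_zero.mp hfac
    rcases this with h | h
    · linarith
    · exact absurd h hpos.ne'
  · intro a
    set v : EuclideanSpace ℝ (Fin m) := w - ℓ⁻¹ • g with hv
    set x : EuclideanSpace ℝ (Fin m) := lam • v with hx
    have hnx : ‖x‖ = lam * ‖v‖ := by
      rw [hx, norm_smul, Real.norm_eq_abs, abs_of_nonneg hlam]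
    have hgrad : g + ℓ • (x - w) + (6 * ρ * ‖x‖) • x = 0 := by
      rw [hnx, hx, hv]
      have key : g + ℓ • (lam • (w - ℓ⁻¹ • g) - w)
          + (6 * ρ * (lam * ‖w - ℓ⁻¹ • g‖)) • lam • (w - ℓ⁻¹ • g)
          = ((lam - 1) * ℓ + 6 * ρ * lam ^ 2 * ‖w - ℓ⁻¹ • g‖) • (w - ℓ⁻¹ • g) := by
        have hℓne : ℓ ≠ 0 := hℓ.ne'
        match_scalars <;> field_simp <;> ring
      rw [key, hroot, zero_smul]
    have h0 : ⟪a - x, g + ℓ • (x - w) + (6 * ρ * ‖x‖) • x⟫ = 0 := by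
      rw [hgrad, inner_zero_right]
    have h1 : (⟪a, g⟫ - ⟪x, g⟫) + ℓ * ⟪x - w, a - x⟫ + 6 * ρ * ‖x‖ * ⟪x, a - x⟫ = 0 := by
      rw [inner_add_right, inner_add_right, real_inner_smul_right, real_inner_smul_right,
        inner_sub_left] at h0
      linear_combination h0 + ℓ * real_inner_comm (a - x) (x - w)
        + 6 * ρ * ‖x‖ * real_inner_comm (a - x) x
    have h2 : ‖a - w‖ ^ 2 = ‖x - w‖ ^ 2 + 2 * ⟪x - w, a - x⟫ + ‖a - x‖ ^ 2 := by
      have := norm_add_sq_real (x - w) (a - x)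
      rw [show x - w + (a - x) = a - w by abel] at this
      linarith
    have h3 : ‖x‖ ^ 3 + 3 * ‖x‖ * ⟪x, a - x⟫ ≤ ‖a‖ ^ 3 := cube_ineq x a
    have h4 : 2 * ρ * (‖x‖ ^ 3 + 3 * ‖x‖ * ⟪x, a - x⟫) ≤ 2 * ρ * ‖a‖ ^ 3 :=
      mul_le_mul_of_nonneg_left h3 (by positivity)
    have h5 : (0:ℝ) ≤ ‖a - x‖ ^ 2 := sq_nonneg _
    nlinarith [h1, h2, h4, h5, hℓ]
end

section
/- Let g : ℝ^d → ℝ^d be monotone and ℓ-Lipschitz, and let ψ(z) be convex (e.g., ψ(x,y) = 2ρ‖x‖³ + 2ρ‖y‖³). Consider one step of the generalized mirror-prox iteration: z_{j+1/2} = argmin_z {⟨z, g(z_j)⟩ + (ℓ/2)‖z - z_j‖² + ψ(z)} and z_{j+1} = argmin_z {⟨z, g(z_{j+1/2})⟩ + (ℓ/2)‖z - z_j‖² + ψ(z)}. Then for any z⋆, (ℓ/2)(‖z⋆ - z_j‖² - ‖z⋆ - z_{j+1}‖²) ≥ ⟨z_{j+1/2} - z⋆, g(z_{j+1/2})⟩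 + ψ(z_{j+1/2}) - ψ(z⋆). -/
open scoped RealInnerProductSpace

lemma mp_aux (d : ℕ) (ℓ : ℝ) (hℓ : 0 < ℓ)
    (ψ : EuclideanSpace ℝ (Fin d) → ℝ) (hψ : ConvexOn ℝ Set.univ ψ)
    (v zj zhat z : EuclideanSpace ℝ (Fin d))
    (hmin : ∀ w, ⟪zhat, v⟫ + ℓ / 2 * ‖zhat - zj‖ ^ 2 + ψ zhat ≤
      ⟪w, v⟫ + ℓ / 2 * ‖w - zj‖ ^ 2 + ψ w) :
    ⟪zhat, v⟫ + ℓ / 2 * ‖zhat - zj‖ ^ 2 + ψ zhat + ℓ / 2 * ‖z - zhat‖ ^ 2 ≤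
      ⟪z, v⟫ + ℓ / 2 * ‖z - zj‖ ^ 2 + ψ z := by
  set c : ℝ := ℓ / 2 * ‖z - zhat‖ ^ 2 with hc
  set D : ℝ := (⟪z, v⟫ + ℓ / 2 * ‖z - zj‖ ^ 2 + ψ z) -
      (⟪zhat, v⟫ + ℓ / 2 * ‖zhat - zj‖ ^ 2 + ψ zhat) with hD
  have hD0 : 0 ≤ D := by rw [hD]; linarith [hmin z]
  have key : ∀ t : ℝ, 0 < t → t ≤ 1 → (1 - t) * c ≤ D := by
    intro t ht ht1
    have hconv := hψ.2 (Set.mem_univ zhat) (Set.mem_univ z)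
      (by linarith : (0:ℝ) ≤ 1 - t) ht.le (by ring)
    have hm := hmin ((1 - t) • zhat + t • z)
    have hinner : ⟪(1 - t) • zhat + t • z, v⟫ = (1 - t) * ⟪zhat, v⟫ + t * ⟪z, v⟫ := by
      rw [inner_add_left, real_inner_smul_left, real_inner_smul_left]
    have hw : (1 - t) • zhat + t • z - zj = (zhat - zj) + t • (z - zhat) := by
      module
    have hnorm : ‖(1 - t) • zhat + t • z - zj‖ ^ 2 =
        ‖zhat - zj‖ ^ 2 + 2 * t * ⟪zhat - zj, z - zhat⟫ + t ^ 2 * ‖z - zhat‖ ^ 2 := by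
      rw [hw, norm_add_sq_real, real_inner_smul_right, norm_smul]
      simp [abs_of_pos ht, mul_pow]
      ring
    have hnorm2 : ‖z - zj‖ ^ 2 =
        ‖zhat - zj‖ ^ 2 + 2 * ⟪zhat - zj, z - zhat⟫ + ‖z - zhat‖ ^ 2 := by
      have : z - zj = (zhat - zj) + (z - zhat) := by module
      rw [this, norm_add_sq_real]
    simp only [smul_eq_mul] at hconv
    have h1 : t * ((1 - t) * c) ≤ t * D := by
      rw [hinner, hnorm] at hm
      simp only [hc, hD]
      rw [hnorm2]
      nlinarith [hm, hconv]
    exact le_of_mul_le_mul_left h1 ht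
  have hcD : c ≤ D := by
    rcases le_or_gt c 0 with h | h
    · linarith
    · refine le_of_forall_pos_le_add fun ε hε => ?_
      set m : ℝ := min (ε / c) 1 with hm
      have ht : 0 < m := lt_min (div_pos hε h) one_pos
      have hk := key m ht (min_le_right _ _)
      have h2 : c * m ≤ c * (ε / c) :=
        mul_le_mul_of_nonneg_left (min_le_left _ _) h.le
      rw [mul_div_cancel₀ _ h.ne'] at h2
      have hexp : (1 - m) * c = c - c * m := by ring
      rw [hexp] at hk
      linarith
  simp only [hc, hD] at hcD
  linarith

open scoped RealInnerProductSpace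

/-- One-step estimate for the generalized mirror-prox iteration. -/
theorem stmt_16 (d : ℕ) (ℓ : ℝ) (hℓ : 0 < ℓ)
    (g : EuclideanSpace ℝ (Fin d) → EuclideanSpace ℝ (Fin d))
    (hmono : ∀ z z', 0 ≤ ⟪z - z', g z - g z'⟫)
    (hlip : ∀ z z', ‖g z - g z'‖ ≤ ℓ * ‖z - z'‖)
    (ψ : EuclideanSpace ℝ (Fin d) → ℝ)
    (hψconv : ConvexOn ℝ Set.univ ψ)
    (hψdiff : Differentiable ℝ ψ)
    (zj zhalf znext zstar : EuclideanSpace ℝ (Fin d))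
    (hhalf : ∀ z, ⟪zhalf, g zj⟫ + ℓ / 2 * ‖zhalf - zj‖ ^ 2 + ψ zhalf ≤
      ⟪z, g zj⟫ + ℓ / 2 * ‖z - zj‖ ^ 2 + ψ z)
    (hnext : ∀ z, ⟪znext, g zhalf⟫ + ℓ / 2 * ‖znext - zj‖ ^ 2 + ψ znext ≤
      ⟪z, g zhalf⟫ + ℓ / 2 * ‖z - zj‖ ^ 2 + ψ z) :
    ⟪zhalf - zstar, g zhalf⟫ + ψ zhalf - ψ zstar ≤
      ℓ / 2 * (‖zstar - zj‖ ^ 2 - ‖zstar - znext‖ ^ 2) := by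
  have A := mp_aux d ℓ hℓ ψ hψconv (g zhalf) zj znext zstar hnext
  have B := mp_aux d ℓ hℓ ψ hψconv (g zj) zj zhalf znext hhalf
  have hsplit : ⟪znext, g zj⟫ - ⟪zhalf, g zj⟫ =
      (⟪znext, g zhalf⟫ - ⟪zhalf, g zhalf⟫) + ⟪znext - zhalf, g zj - g zhalf⟫ := by
    simp [inner_sub_left, inner_sub_right]
  have hub : ⟪znext - zhalf, g zj - g zhalf⟫ ≤
      ℓ / 2 * (‖znext - zhalf‖ ^ 2 + ‖zhalf - zj‖ ^ 2) := by
    have h1 := real_inner_le_norm (znext - zhalf) (g zj - g zhalf)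
    have h2 := hlip zj zhalf
    rw [norm_sub_rev zj zhalf] at h2
    have h4 : ‖znext - zhalf‖ * ‖g zj - g zhalf‖ ≤ ‖znext - zhalf‖ * (ℓ * ‖zhalf - zj‖) :=
      mul_le_mul_of_nonneg_left h2 (norm_nonneg _)
    nlinarith [sq_nonneg (‖znext - zhalf‖ - ‖zhalf - zj‖), hℓ.le]
  rw [inner_sub_left]
  linarith [A, B, hub, hsplit]
end

section
/- (Lemma 4 of Nesterov's cubic analysis, used in Proposition 2) For any u, v ∈ ℝ^d (Euclidean norm): ‖u‖³ - ‖v‖³ - 3⟨u - v, ‖v‖v⟩ ≥ (1/4)‖u - v‖³. -/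
open scoped RealInnerProductSpace

lemma stmt_17_aux (a b c : ℝ) (ha : 0 ≤ a) (hb : 0 ≤ b) (hc : 0 ≤ c)
    (h1 : a ≤ b + c) (h2 : c ≤ a + b) :
    (1/4) * c^3 ≤ a^3 - b^3 - (3*b/2) * (a^2 - b^2 - c^2) := by
  nlinarith [sq_nonneg (a-b), sq_nonneg (a+b-c), sq_nonneg (a-b+c), sq_nonneg (c - 2*b),
    sq_nonneg (a - b - c/2), mul_nonneg hb (sq_nonneg (a-b)), mul_nonneg hc (sq_nonneg (a-b)),
    mul_nonneg hb (sq_nonneg (c-2*b))]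

/-- Uniform convexity of degree 3 of the cubed Euclidean norm:
`‖u‖³ - ‖v‖³ - 3⟨u - v, ‖v‖v⟩ ≥ (1/4)‖u - v‖³`. -/
theorem stmt_17 (d : ℕ) (u v : EuclideanSpace ℝ (Fin d)) :
    (1 / 4 : ℝ) * ‖u - v‖ ^ 3 ≤ ‖u‖ ^ 3 - ‖v‖ ^ 3 - 3 * ⟪u - v, ‖v‖ • v⟫ := by
  have hinner : ⟪u - v, ‖v‖ • v⟫ = ‖v‖ * (‖u‖^2 - ‖v‖^2 - ‖u - v‖^2) / 2 := by
    rw [real_inner_smul_right]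
    have h := @norm_sub_sq_real (EuclideanSpace ℝ (Fin d)) _ _ u v
    have h2 : ⟪u - v, v⟫ = ⟪u, v⟫ - ⟪v, v⟫ := by rw [inner_sub_left]
    rw [real_inner_self_eq_norm_sq] at h2
    rw [h2]; linear_combination (‖v‖/2) * h
  rw [hinner]
  have hb : (0:ℝ) ≤ ‖v‖ := norm_nonneg _
  have hc : (0:ℝ) ≤ ‖u - v‖ := norm_nonneg _
  have htri : ‖u - v‖ ≤ ‖u‖ + ‖v‖ := norm_sub_le _ _
  have := stmt_17_aux ‖u‖ ‖v‖ ‖u - v‖ (norm_nonneg _) hb hc (by simpa using (norm_sub_le (u-v) (-v)).trans_eq (add_comm _ _)) htri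
  linarith
end

section
/- If ẑ_k = ẑ_{k-1} - λ_k F(z_k) for all k ≥ 1 with ẑ₀ = z₀, (z_k - z⋆)ᵀF(z_k) ≥ 0 for all k, and the descent inequality Σ_{k=1}^t λ_k⟨z_k - z, F(z_k)⟩ ≤ E(0) - E(t) + ⟨z₀ - ẑ_t, z₀ - z⟩ - (1/24)Σ_{k=1}^t ‖z_k - ẑ_{k-1}‖² holds for all z and t (with E(t) = (1/2)‖ẑ_t - z₀‖², E(0) = 0), then for every t: Σ_{k=1}^t λ_k⟨z_k - z, F(z_k)⟩ ≤ (1/2)‖z₀ - z‖² for all z, and Σ_{k=1}^t ‖z_k - ẑ_{k-1}‖² ≤ 12‖z₀ - z⋆‖². -/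
open scoped RealInnerProductSpace

/-- Consequences of the key descent inequality: bounded weighted sums and bounded
cumulative displacements. -/
theorem stmt_18 (d : ℕ) (z₀ zstar : EuclideanSpace ℝ (Fin d))
    (z zhat : ℕ → EuclideanSpace ℝ (Fin d))
    (Fz : ℕ → EuclideanSpace ℝ (Fin d))
    (lam : ℕ → ℝ) (hlam : ∀ k, 0 < lam k)
    (h0 : zhat 0 = z₀)
    (hrec : ∀ k, 1 ≤ k → zhat k = zhat (k - 1) - lam k • Fz k)
    (hstar : ∀ k, 0 ≤ ⟪z k - zstar, Fz k⟫)
    (hdesc : ∀ (zz : EuclideanSpace ℝ (Fin d)) (t : ℕ),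
      ∑ k ∈ Finset.Icc 1 t, lam k * ⟪z k - zz, Fz k⟫ ≤
        (1 / 2) * ‖zhat 0 - z₀‖ ^ 2 - (1 / 2) * ‖zhat t - z₀‖ ^ 2 +
          ⟪z₀ - zhat t, z₀ - zz⟫ -
          (1 / 24) * ∑ k ∈ Finset.Icc 1 t, ‖z k - zhat (k - 1)‖ ^ 2) :
    ∀ t : ℕ,
      (∀ zz : EuclideanSpace ℝ (Fin d),
        ∑ k ∈ Finset.Icc 1 t, lam k * ⟪z k - zz, Fz k⟫ ≤ (1 / 2) * ‖z₀ - zz‖ ^ 2) ∧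
        ∑ k ∈ Finset.Icc 1 t, ‖z k - zhat (k - 1)‖ ^ 2 ≤ 12 * ‖z₀ - zstar‖ ^ 2 := by
  have h00 : ‖zhat 0 - z₀‖ = 0 := by rw [h0, sub_self, norm_zero]
  have key : ∀ (zz : EuclideanSpace ℝ (Fin d)) (t : ℕ),
      ⟪z₀ - zhat t, z₀ - zz⟫ - (1 / 2) * ‖zhat t - z₀‖ ^ 2 ≤ (1 / 2) * ‖z₀ - zz‖ ^ 2 := by
    intro zz t
    have h1 := real_inner_le_norm (z₀ - zhat t) (z₀ - zz)
    have h2 : ‖zhat t - z₀‖ = ‖z₀ - zhat t‖ := norm_sub_rev _ _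
    rw [h2]
    nlinarith [sq_nonneg (‖z₀ - zhat t‖ - ‖z₀ - zz‖)]
  intro t
  have hs : (0:ℝ) ≤ ∑ k ∈ Finset.Icc 1 t, ‖z k - zhat (k - 1)‖ ^ 2 :=
    Finset.sum_nonneg fun k _ => sq_nonneg _
  constructor
  · intro zz
    have hd := hdesc zz t
    have hk := key zz t
    rw [h00] at hd
    linarith
  · have hd := hdesc zstar t
    have hk := key zstar t
    rw [h00] at hd
    have hL : (0:ℝ) ≤ ∑ k ∈ Finset.Icc 1 t, lam k * ⟪z k - zstar, Fz k⟫ :=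
      Finset.sum_nonneg fun k _ => mul_nonneg (hlam k).le (hstar k)
    linarith
end
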